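/- Let φ : ℂ^{m+1}\{0} → ℝ be smooth, scaling-invariant, G-invariant and g-admissible, with sup φ = 0 over ℂ^{m+1}\{0}. Then for every real ζ > 0, (φ−ψ)(1,…,1,ζ,…,ζ) ≥ 0, where the value 1 occupies the first k+1 coordinates and ζ the last m−k coordinates. -/

import Mathlib

open Complex MeasureTheory Finset

noncomputable section

/-- Squared norm of a complex vector. -/
def nsq {n : ℕ} (z : Fin n → ℂ) : ℝ := ∑ i, ‖z i‖ ^ 2

/-- Laplacian at a point of a real-valued function of one complex variable. -/
def lap (f : ℂ → ℝ) (t : ℂ) : ℝ :=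
  lineDeriv ℝ (fun s => lineDeriv ℝ f s 1) t 1 +
  lineDeriv ℝ (fun s => lineDeriv ℝ f s Complex.I) t Complex.I

def psi1 (m k : ℕ) (z : Fin (m + 1) → ℂ) : ℝ :=
  Real.log ((∏ i ∈ Finset.univ.filter (fun i : Fin (m + 1) => (i : ℕ) ≤ k),
      ‖z i‖) ^ (2 * ((m : ℝ) + 1) / ((k : ℝ) + 1)) /
    nsq z ^ ((m : ℝ) + 1))

def psi2 (m k : ℕ) (z : Fin (m + 1) → ℂ) : ℝ :=
  Real.log ((∏ i ∈ Finset.univ.filter (fun i : Fin (m + 1) => k + 1 ≤ (i : ℕ)),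
      ‖z i‖) ^ (2 * ((m : ℝ) + 1) / ((m : ℝ) - (k : ℝ))) /
    nsq z ^ ((m : ℝ) + 1))

def psi (m k : ℕ) (z : Fin (m + 1) → ℂ) : ℝ := min (psi1 m k z) (psi2 m k z)

/-- Scaling invariance: φ descends to projective space. -/
def ScalInv (m : ℕ) (φ : (Fin (m + 1) → ℂ) → ℝ) : Prop :=
  ∀ lam : ℂ, lam ≠ 0 → ∀ z : Fin (m + 1) → ℂ, φ (lam • z) = φ z

/-- Invariance under the group G. -/
def GInv (m k : ℕ) (φ : (Fin (m + 1) → ℂ) → ℝ) : Prop :=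
  (∀ i j : Fin (m + 1), (i : ℕ) ≤ k → (j : ℕ) ≤ k →
      ∀ z : Fin (m + 1) → ℂ, φ (z ∘ Equiv.swap i j) = φ z) ∧
  (∀ p q : Fin (m + 1), k + 1 ≤ (p : ℕ) → k + 1 ≤ (q : ℕ) →
      ∀ z : Fin (m + 1) → ℂ, φ (z ∘ Equiv.swap p q) = φ z) ∧
  (∀ l : Fin (m + 1), ∀ θ : ℝ, ∀ z : Fin (m + 1) → ℂ,
      φ (Function.update z l (Complex.exp ((θ : ℂ) * Complex.I) * z l)) = φ z)

/-- g-admissibility: positivity of g + i∂∂̄φ expressed along complex lines. -/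
def Adm (m : ℕ) (φ : (Fin (m + 1) → ℂ) → ℝ) : Prop :=
  ∀ z : Fin (m + 1) → ℂ, z ≠ 0 → ∀ w : Fin (m + 1) → ℂ, (∀ c : ℂ, w ≠ c • z) →
    0 < lap (fun t : ℂ => ((m : ℝ) + 1) * Real.log (nsq (z + t • w)) + φ (z + t • w)) 0

namespace Stmt9Aux

variable {F : ℂ → ℝ}

lemma hasDerivAt_comp_curve (hF : ContDiff ℝ 2 F) {γ γ' : ℝ → ℂ}
    (hγ : ∀ x, HasDerivAt γ (γ' x) x) (x : ℝ) :
    HasDerivAt (fun y => F (γ y)) (fderiv ℝ F (γ x) (γ' x)) x :=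
  (hF.differentiable two_ne_zero (γ x)).hasFDerivAt.comp_hasDerivAt x (hγ x)

lemma hasDerivAt_comp_curve2 (hF : ContDiff ℝ 2 F) {γ γ' γ'' : ℝ → ℂ}
    (hγ : ∀ x, HasDerivAt γ (γ' x) x) (hγ' : ∀ x, HasDerivAt γ' (γ'' x) x) (x : ℝ) :
    HasDerivAt (fun y => fderiv ℝ F (γ y) (γ' y))
      (fderiv ℝ (fderiv ℝ F) (γ x) (γ' x) (γ' x) + fderiv ℝ F (γ x) (γ'' x)) x := by
  have hD : Differentiable ℝ (fderiv ℝ F) :=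
    (hF.fderiv_right (m := 1) le_rfl).differentiable one_ne_zero
  have hc : HasDerivAt (fun y => fderiv ℝ F (γ y)) (fderiv ℝ (fderiv ℝ F) (γ x) (γ' x)) x :=
    (hD (γ x)).hasFDerivAt.comp_hasDerivAt x (hγ x)
  exact hc.clm_apply (hγ' x)

lemma lap_eq_d2 (hF : ContDiff ℝ 2 F) (t : ℂ) :
    lap F t = fderiv ℝ (fderiv ℝ F) t 1 1 + fderiv ℝ (fderiv ℝ F) t I I := by
  have hd : Differentiable ℝ F := hF.differentiable two_ne_zero
  have key : ∀ v : ℂ, lineDeriv ℝ (fun s => lineDeriv ℝ F s v) t v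
      = fderiv ℝ (fderiv ℝ F) t v v := by
    intro v
    have h1 : (fun s => lineDeriv ℝ F s v) = fun s => fderiv ℝ F s v := by
      funext s; exact (hd s).lineDeriv_eq_fderiv
    rw [h1]
    have hγ : ∀ x : ℝ, HasDerivAt (fun τ : ℝ => t + τ • v) v x := by
      intro x
      simpa using ((hasDerivAt_id x).smul_const v).const_add t
    have h2 := hasDerivAt_comp_curve2 hF hγ (fun x => hasDerivAt_const x v) 0
    have h2' := h2.deriv
    rw [lineDeriv]
    convert h2' using 2 <;> simp
  rw [lap, key 1, key I]

lemma radial_identity (hF : ContDiff ℝ 2 F)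
    (hrad : ∀ (c t : ℂ), ‖c‖ = 1 → F (c * t) = F t)
    {r : ℝ} (hr : 0 < r) :
    fderiv ℝ F (r:ℂ) 1 = r * fderiv ℝ (fderiv ℝ F) (r:ℂ) I I := by
  set γ : ℝ → ℂ := fun θ => (r:ℂ) * Complex.exp (θ * I) with hγdef
  set γ' : ℝ → ℂ := fun θ => (r:ℂ) * I * Complex.exp (θ * I) with hγ'def
  set γ'' : ℝ → ℂ := fun θ => -(r:ℂ) * Complex.exp (θ * I) with hγ''def
  have hexp : ∀ θ : ℝ, HasDerivAt (fun θ : ℝ => Complex.exp (θ * I))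
      (Complex.exp (θ * I) * I) θ := by
    intro θ
    have h0 : HasDerivAt (fun θ : ℝ => ((θ : ℂ) * I)) I θ := by
      simpa using ((hasDerivAt_id θ).ofReal_comp).mul_const I
    simpa using h0.cexp
  have hγ : ∀ θ, HasDerivAt γ (γ' θ) θ := by
    intro θ
    have := (hexp θ).const_mul (r:ℂ)
    simpa [hγdef, hγ'def, mul_assoc, mul_comm, mul_left_comm] using this
  have hγ' : ∀ θ, HasDerivAt γ' (γ'' θ) θ := by
    intro θ
    have := (hexp θ).const_mul ((r:ℂ) * I)
    have h2 : (r:ℂ) * I * (Complex.exp (θ * I) * I) = -(r:ℂ) * Complex.exp (θ*I) := by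
      linear_combination ((r:ℂ) * Complex.exp (θ*I)) * Complex.I_sq
    simpa [hγ'def, hγ''def, h2] using this
  -- F ∘ γ is constant
  have hconst : (fun θ : ℝ => F (γ θ)) = fun _ => F (r:ℂ) := by
    funext θ
    have := hrad (Complex.exp (θ * I)) (r:ℂ) (Complex.norm_exp_ofReal_mul_I θ)
    simpa [hγdef, mul_comm] using this
  have hd1 : ∀ θ, deriv (fun θ : ℝ => F (γ θ)) θ = fderiv ℝ F (γ θ) (γ' θ) := fun θ =>
    (hasDerivAt_comp_curve hF hγ θ).deriv
  have hzero : fderiv ℝ (fderiv ℝ F) (γ 0) (γ' 0) (γ' 0) + fderiv ℝ F (γ 0) (γ'' 0) = 0 := by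
    have h2 := (hasDerivAt_comp_curve2 hF hγ hγ' 0).deriv
    rw [← h2]
    have : (fun θ => fderiv ℝ F (γ θ) (γ' θ)) = fun θ => deriv (fun θ : ℝ => F (γ θ)) θ := by
      funext θ; rw [hd1]
    rw [this]
    have : (fun θ => deriv (fun θ : ℝ => F (γ θ)) θ) = fun _ => (0:ℝ) := by
      funext θ; rw [hconst]; simp
    rw [this]; simp
  have e0 : γ 0 = (r:ℂ) := by simp [hγdef]
  have e1 : γ' 0 = r • I := by simp [hγ'def, Complex.real_smul]
  have e2 : γ'' 0 = (-r) • (1:ℂ) := by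
    simp [hγ''def, Complex.real_smul]
  rw [e0, e1, e2] at hzero
  simp only [_root_.map_smul, ContinuousLinearMap.smul_apply, smul_eq_mul] at hzero
  have : r * (r * fderiv ℝ (fderiv ℝ F) (r:ℂ) I I) + -r * fderiv ℝ F (r:ℂ) 1 = 0 := by
    simpa using hzero
  have hrne : r ≠ 0 := ne_of_gt hr
  field_simp at this
  nlinarith [this]

lemma radial_exp_convex (hF : ContDiff ℝ 2 F)
    (hrad : ∀ (c t : ℂ), ‖c‖ = 1 → F (c * t) = F t)
    (hsub : ∀ t, 0 ≤ lap F t) :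
    ConvexOn ℝ Set.univ (fun x : ℝ => F (Real.exp x)) := by
  set γ : ℝ → ℂ := fun x => ((Real.exp x : ℝ) : ℂ) with hγdef
  have hγ : ∀ x, HasDerivAt γ (γ x) x := fun x =>
    (Real.hasDerivAt_exp x).ofReal_comp
  have H' : ∀ x, HasDerivAt (fun x : ℝ => F (Real.exp x)) (fderiv ℝ F (γ x) (γ x)) x := by
    intro x; exact hasDerivAt_comp_curve hF hγ x
  have H'' : ∀ x, HasDerivAt (fun x => fderiv ℝ F (γ x) (γ x))
      (fderiv ℝ (fderiv ℝ F) (γ x) (γ x) (γ x) + fderiv ℝ F (γ x) (γ x)) x := fun x =>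
    hasDerivAt_comp_curve2 hF hγ hγ x
  apply convexOn_of_hasDerivWithinAt2_nonneg (f' := fun x => fderiv ℝ F (γ x) (γ x))
      (f'' := fun x => fderiv ℝ (fderiv ℝ F) (γ x) (γ x) (γ x) + fderiv ℝ F (γ x) (γ x))
      convex_univ
  · exact fun x _ => ((H' x).continuousAt).continuousWithinAt
  · exact fun x _ => (H' x).hasDerivWithinAt
  · exact fun x _ => (H'' x).hasDerivWithinAt
  · intro x _
    have hrpos : (0:ℝ) < Real.exp x := Real.exp_pos x
    have hrid := radial_identity hF hrad hrpos
    have hcast : γ x = (Real.exp x : ℝ) • (1:ℂ) := by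
      simp [hγdef, Complex.real_smul]
    have hlap := hsub ((Real.exp x : ℝ) : ℂ)
    rw [lap_eq_d2 hF] at hlap
    set e := Real.exp x with he
    set T2 := fderiv ℝ (fderiv ℝ F) ((e:ℝ):ℂ) with hT2
    set T1 := fderiv ℝ F ((e:ℝ):ℂ) with hT1
    have hv : ((e:ℝ):ℂ) = (e:ℝ) • (1:ℂ) := by simp [Complex.real_smul]
    show (0:ℝ) ≤ T2 ((e:ℝ):ℂ) ((e:ℝ):ℂ) + T1 ((e:ℝ):ℂ)
    rw [hv]
    simp only [_root_.map_smul, ContinuousLinearMap.smul_apply, smul_eq_mul]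
    have h1 : T1 1 = e * (T2 I I) := by simpa using hrid
    have hlap' : (0:ℝ) ≤ T2 1 1 + T2 I I := hlap
    rw [h1]
    nlinarith [mul_nonneg (mul_nonneg hrpos.le hrpos.le) hlap']

lemma convex_mono_of_bddAbove {f : ℝ → ℝ} (hf : ConvexOn ℝ Set.univ f) {C a : ℝ}
    (hb : ∀ x ≤ a, f x ≤ C) : Monotone f := by
  intro x y hxy
  rcases eq_or_lt_of_le hxy with rfl | hxy
  · exact le_rfl
  by_contra hcon
  push_neg at hcon
  set s := (f y - f x) / (y - x) with hs_def
  have hyx : 0 < y - x := by linarith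
  have hs : s < 0 := div_neg_of_neg_of_pos (by linarith) hyx
  set q := (C + 1 - f x) / (-s) with hq_def
  set M := max 0 q with hM_def
  set u := x - min a x with hu_def
  have hu : 0 ≤ u := by
    have := min_le_right a x; simp only [hu_def]; linarith
  set t := min a x - 1 - M with ht_def
  have hta : t ≤ a := by
    have h1 := min_le_left a x
    have h2 : 0 ≤ M := le_max_left 0 q
    simp only [ht_def]; linarith
  have htx : t < x := by
    have h1 := min_le_right a x
    have h2 : 0 ≤ M := le_max_left 0 q
    simp only [ht_def]; linarith
  have hslope := hf.slope_mono_adjacent (Set.mem_univ t) (Set.mem_univ y) htx hxy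
  have hslope2 : (f x - f t) / (x - t) ≤ s := hslope
  have hxt : x - t = u + 1 + M := by simp only [ht_def, hu_def]; ring
  have hineq : f x - f t ≤ s * (u + 1 + M) := by
    rw [← hxt]
    exact (div_le_iff₀ (by linarith)).1 hslope2
  have hexp : s * (u + 1 + M) = s * u + s + s * M := by ring
  have hsu : s * u ≤ 0 := mul_nonpos_of_nonpos_of_nonneg hs.le hu
  have hsM : s * M ≤ f x - C - 1 := by
    rcases le_or_gt 0 q with hq | hq
    · have : M = q := max_eq_right hq
      rw [this, hq_def]
      have hsne : -s > 0 := by linarith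
      rw [mul_div_assoc']
      rw [div_le_iff₀ hsne]
      ring_nf
      nlinarith
    · have : M = 0 := max_eq_left hq.le
      rw [this, mul_zero]
      have : ¬ (0 ≤ (C + 1 - f x)) := by
        intro h
        exact absurd (div_nonneg h (by linarith : (0:ℝ) ≤ -s)) (not_le.2 hq)
      push_neg at this
      linarith
  have hft : f t ≤ C := hb t hta
  linarith [hineq, hexp.symm ▸ hineq]

lemma convexOn_comp_neg {f : ℝ → ℝ} (hf : ConvexOn ℝ Set.univ f) :
    ConvexOn ℝ Set.univ (fun x => f (-x)) := by
  refine ⟨convex_univ, fun x _ y _ a b ha hb hab => ?_⟩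
  have := hf.2 (Set.mem_univ (-x)) (Set.mem_univ (-y)) ha hb hab
  have h2 : a • (-x) + b • (-y) = -(a • x + b • y) := by
    simp [smul_neg]; ring
  rw [h2] at this
  simpa using this

lemma ConvexOn.sub_linear {f : ℝ → ℝ} (hf : ConvexOn ℝ Set.univ f) (c : ℝ) :
    ConvexOn ℝ Set.univ (fun x => f x - c * x) := by
  refine ⟨convex_univ, fun x _ y _ a b ha hb hab => ?_⟩
  have := hf.2 (Set.mem_univ x) (Set.mem_univ y) ha hb hab
  simp only [smul_eq_mul] at *
  nlinarith [this]

lemma convex_anti_of_bddAbove {f : ℝ → ℝ} (hf : ConvexOn ℝ Set.univ f) {C a : ℝ}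
    (hb : ∀ x, a ≤ x → f x ≤ C) : Antitone f := by
  have h1 : Monotone (fun x => f (-x)) := by
    apply convex_mono_of_bddAbove (convexOn_comp_neg hf) (C := C) (a := -a)
    intro x hx
    exact hb (-x) (by linarith)
  intro x y hxy
  have := h1 (neg_le_neg hxy)
  simpa using this

lemma lineDeriv_shift (f : ℂ → ℝ) (a x v : ℂ) :
    lineDeriv ℝ (fun t => f (a + t)) x v = lineDeriv ℝ f (a + x) v := by
  simp only [lineDeriv]
  congr 1
  funext τ
  rw [add_assoc]

lemma lap_shift (f : ℂ → ℝ) (a t : ℂ) :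
    lap (fun s => f (a + s)) t = lap f (a + t) := by
  have h1 : ∀ v : ℂ, (fun s => lineDeriv ℝ (fun u => f (a + u)) s v)
      = fun s => lineDeriv ℝ f (a + s) v := by
    intro v; funext s; exact lineDeriv_shift f a s v
  simp only [lap, h1]
  rw [← lineDeriv_shift (fun s => lineDeriv ℝ f s 1) a t 1,
      ← lineDeriv_shift (fun s => lineDeriv ℝ f s I) a t I]


/-! Problem-specific auxiliary material -/

lemma nsq_congr {n : ℕ} {z z' : Fin n → ℂ} (h : ∀ i, ‖z i‖ = ‖z' i‖) :
    nsq z = nsq z' := by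
  unfold nsq; exact Finset.sum_congr rfl fun i _ => by rw [h i]

lemma nsq_nonneg_terms {n : ℕ} (z : Fin n → ℂ) (i : Fin n) :
    ‖z i‖ ^ 2 ≤ nsq z := by
  unfold nsq
  exact Finset.single_le_sum (f := fun j => ‖z j‖ ^ 2) (fun i _ => by positivity) (Finset.mem_univ i)

lemma nsq_pos {n : ℕ} {z : Fin n → ℂ} (hz : z ≠ 0) : 0 < nsq z := by
  obtain ⟨j, hj⟩ : ∃ j, z j ≠ 0 := by
    by_contra h; push_neg at h; exact hz (funext fun i => h i)
  have h1 : 0 < ‖z j‖ ^ 2 := by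
    have := norm_pos_iff.mpr hj; positivity
  exact lt_of_lt_of_le h1 (nsq_nonneg_terms z j)

lemma contDiff_nsq {n : ℕ} : ContDiff ℝ (⊤ : ℕ∞) (fun z : Fin n → ℂ => nsq z) := by
  have h : (fun z : Fin n → ℂ => nsq z)
      = fun z => ∑ i : Fin n, ((z i).re ^ 2 + (z i).im ^ 2) := by
    funext z; unfold nsq
    exact Finset.sum_congr rfl fun i _ => by
      rw [Complex.sq_norm, Complex.normSq_apply]; ring
  rw [h]
  apply ContDiff.sum
  intro i _
  have hproj : ContDiff ℝ (⊤ : ℕ∞) (fun z : Fin n → ℂ => z i) :=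
    (ContinuousLinearMap.proj i : (Fin n → ℂ) →L[ℝ] ℂ).contDiff
  exact ((Complex.reCLM.contDiff.comp hproj).pow 2).add
    ((Complex.imCLM.contDiff.comp hproj).pow 2)

/-- The basic potential. -/
def Phi (m : ℕ) (φ : (Fin (m + 1) → ℂ) → ℝ) (z : Fin (m + 1) → ℂ) : ℝ :=
  ((m : ℝ) + 1) * Real.log (nsq z) + φ z

section Main

variable {m k : ℕ} {φ : (Fin (m + 1) → ℂ) → ℝ}

lemma contDiff_phi_line (hsm : ContDiffOn ℝ (⊤ : ℕ∞) φ {z : Fin (m + 1) → ℂ | z ≠ 0})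
    (ℓ : ℂ → (Fin (m + 1) → ℂ)) (hℓ : ContDiff ℝ (⊤ : ℕ∞) ℓ) (hne : ∀ t, ℓ t ≠ 0) :
    ContDiff ℝ 2 (fun t => Phi m φ (ℓ t)) := by
  rw [contDiff_iff_contDiffAt]; intro t
  have hopen : IsOpen {z : Fin (m + 1) → ℂ | z ≠ 0} := isOpen_ne
  have h1 : ContDiffAt ℝ 2 φ (ℓ t) :=
    (hsm.contDiffAt (hopen.mem_nhds (hne t))).of_le (WithTop.coe_le_coe.2 le_top)
  have hℓ2 : ContDiffAt ℝ 2 ℓ t := hℓ.contDiffAt.of_le (WithTop.coe_le_coe.2 le_top)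
  have hnsqℓ : ContDiffAt ℝ 2 (fun s : ℂ => nsq (ℓ s)) t :=
    (contDiff_nsq.contDiffAt.of_le (WithTop.coe_le_coe.2 le_top)).comp t hℓ2
  have hlog : ContDiffAt ℝ 2 Real.log (nsq (ℓ t)) :=
    Real.contDiffAt_log.2 (ne_of_gt (nsq_pos (hne t)))
  exact (contDiffAt_const.mul (hlog.comp t hnsqℓ)).add (h1.comp t hℓ2)

lemma contDiff_ite_line (p : Fin (m + 1) → Prop) [DecidablePred p] (y : Fin (m + 1) → ℂ) :
    ContDiff ℝ (⊤ : ℕ∞) (fun t : ℂ => (fun i => if p i then t else y i)) := by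
  apply contDiff_pi.2
  intro i
  by_cases h : p i
  · simp only [h, ↓reduceIte]; exact contDiff_id
  · simpa [h] using contDiff_const (𝕜 := ℝ) (E := ℂ) (c := y i)

lemma lap_phi_line_pos (hadm : Adm m φ) (z w : Fin (m + 1) → ℂ)
    (hz : ∀ t : ℂ, z + t • w ≠ 0) (hw : ∀ t0 c : ℂ, w ≠ c • (z + t0 • w)) (t0 : ℂ) :
    0 < lap (fun t : ℂ => Phi m φ (z + t • w)) t0 := by
  have h := hadm (z + t0 • w) (hz t0) w (hw t0)
  have heq : (fun t : ℂ => ((m:ℝ)+1) * Real.log (nsq ((z + t0 • w) + t • w)) + φ ((z + t0 • w) + t • w))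
      = fun t => (fun s : ℂ => Phi m φ (z + s • w)) (t0 + t) := by
    funext t
    have : (z + t0 • w) + t • w = z + (t0 + t) • w := by
      rw [add_smul, add_assoc]
    rw [this]; rfl
  rw [heq, lap_shift (fun s : ℂ => Phi m φ (z + s • w)) t0 0, add_zero] at h
  exact h

lemma exp_arg_eq {c : ℂ} (hc : ‖c‖ = 1) : Complex.exp ((c.arg : ℂ) * Complex.I) = c := by
  have h := Complex.norm_mul_exp_arg_mul_I c
  rwa [hc, Complex.ofReal_one, one_mul] at h

lemma phi_phase_finset
    (hG3 : ∀ l : Fin (m + 1), ∀ θ : ℝ, ∀ z : Fin (m + 1) → ℂ,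
      φ (Function.update z l (Complex.exp ((θ : ℂ) * Complex.I) * z l)) = φ z)
    {c : ℂ} (hc : ‖c‖ = 1) (S : Finset (Fin (m + 1))) :
    ∀ z, φ (fun i => if i ∈ S then c * z i else z i) = φ z := by
  induction S using Finset.induction_on with
  | empty => intro z; simp
  | @insert a s hj ih =>
      intro z
      have hupd : (fun i => if i ∈ insert a s then c * z i else z i)
          = Function.update (fun i => if i ∈ s then c * z i else z i) a
              (Complex.exp ((c.arg : ℂ) * Complex.I)
                * (fun i => if i ∈ s then c * z i else z i) a) := by
        rw [exp_arg_eq hc]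
        funext i
        by_cases hia : i = a
        · subst hia; simp [hj]
        · simp [Function.update_apply, hia, Finset.mem_insert]
      rw [hupd, hG3, ih]

lemma ofReal_abs_eq (w : ℂ) :
    Complex.exp (((-(Complex.arg w) : ℝ) : ℂ) * Complex.I) * w = (‖w‖ : ℂ) := by
  have h := Complex.norm_mul_exp_arg_mul_I w
  calc Complex.exp (((-(Complex.arg w) : ℝ) : ℂ) * Complex.I) * w
      = Complex.exp (((-(Complex.arg w) : ℝ) : ℂ) * Complex.I)
          * ((‖w‖ : ℂ) * Complex.exp ((Complex.arg w : ℂ) * Complex.I)) := by rw [h]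
    _ = (‖w‖ : ℂ) * (Complex.exp (((-(Complex.arg w) : ℝ) : ℂ) * Complex.I)
          * Complex.exp ((Complex.arg w : ℂ) * Complex.I)) := by ring
    _ = (‖w‖ : ℂ) * Complex.exp ((((-(Complex.arg w) : ℝ) : ℂ)) * Complex.I
          + (Complex.arg w : ℂ) * Complex.I) := by rw [Complex.exp_add]
    _ = (‖w‖ : ℂ) := by
        push_cast
        ring_nf
        simp [Complex.exp_zero]

lemma phi_strip_phases
    (hG3 : ∀ l : Fin (m + 1), ∀ θ : ℝ, ∀ z : Fin (m + 1) → ℂ,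
      φ (Function.update z l (Complex.exp ((θ : ℂ) * Complex.I) * z l)) = φ z)
    (z : Fin (m + 1) → ℂ) :
    φ (fun i => (‖z i‖ : ℂ)) = φ z := by
  suffices h : ∀ S : Finset (Fin (m + 1)),
      φ (fun i => if i ∈ S then (‖z i‖ : ℂ) else z i) = φ z by
    have := h Finset.univ
    simpa using this
  intro S
  induction S using Finset.induction_on with
  | empty => simp
  | @insert a s hj ih =>
      have hupd : (fun i => if i ∈ insert a s then (‖z i‖ : ℂ) else z i)
          = Function.update (fun i => if i ∈ s then (‖z i‖ : ℂ) else z i) a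
              (Complex.exp (((-(Complex.arg (z a)) : ℝ) : ℂ) * Complex.I)
                * (fun i => if i ∈ s then (‖z i‖ : ℂ) else z i) a) := by
        funext i
        by_cases hia : i = a
        · subst hia
          rw [Function.update_self, if_pos (Finset.mem_insert_self i s)]
          show _ = Complex.exp (((-(Complex.arg (z i)) : ℝ) : ℂ) * Complex.I)
            * (if i ∈ s then ((‖z i‖) : ℂ) else z i)
          rw [if_neg hj, ofReal_abs_eq]
        · simp [Function.update_apply, hia, Finset.mem_insert]
      rw [hupd, hG3, ih]

end Main

section Main2

variable {m k : ℕ} {φ : (Fin (m + 1) → ℂ) → ℝ}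

/-- Monotonicity of `Phi` in the modulus of a single coordinate. -/
lemma coord_mono (hsm : ContDiffOn ℝ (⊤ : ℕ∞) φ {z : Fin (m + 1) → ℂ | z ≠ 0})
    (hG3 : ∀ l : Fin (m + 1), ∀ θ : ℝ, ∀ z : Fin (m + 1) → ℂ,
      φ (Function.update z l (Complex.exp ((θ : ℂ) * Complex.I) * z l)) = φ z)
    (hadm : Adm m φ)
    (y : Fin (m + 1) → ℂ) (j i₀ : Fin (m + 1)) (hij : i₀ ≠ j) (hy0 : y i₀ ≠ 0)
    {r R : ℝ} (hr : 0 ≤ r) (hrR : r ≤ R) (hR : 0 < R) :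
    Phi m φ (Function.update y j (r : ℂ)) ≤ Phi m φ (Function.update y j (R : ℂ)) := by
  classical
  set F : ℂ → ℝ := fun t => Phi m φ (Function.update y j t) with hFdef
  -- the line as z + t • w
  set z0 : Fin (m + 1) → ℂ := Function.update y j 0 with hz0
  set w0 : Fin (m + 1) → ℂ := Pi.single j 1 with hw0
  have hline : ∀ t : ℂ, z0 + t • w0 = Function.update y j t := by
    intro t; funext i
    by_cases h : i = j
    · subst h; simp [hz0, hw0]
    · simp [hz0, hw0, Function.update_apply, h, Pi.single_apply]
  have hne : ∀ t : ℂ, Function.update y j t ≠ 0 := by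
    intro t h
    have := congrFun h i₀
    rw [Function.update_apply, if_neg hij] at this
    exact hy0 this
  -- smoothness
  have hupdate_eq : (fun t : ℂ => Function.update y j t)
      = fun t : ℂ => (fun i => if i = j then t else y i) := by
    funext t i; rw [Function.update_apply]
  have hF : ContDiff ℝ 2 F := by
    rw [hFdef]
    have := contDiff_phi_line (m := m) hsm (fun t : ℂ => Function.update y j t)
      (by rw [hupdate_eq]; exact contDiff_ite_line (fun i => i = j) y) hne
    exact this
  -- radiality
  have hrad : ∀ (c t : ℂ), ‖c‖ = 1 → F (c * t) = F t := by
    intro c t hc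
    have habs : ∀ i, ‖Function.update y j (c * t) i‖
        = ‖Function.update y j t i‖ := by
      intro i
      by_cases h : i = j
      · subst h; simp [map_mul, hc]
      · simp [Function.update_apply, h]
    have hφ : φ (Function.update y j (c * t)) = φ (Function.update y j t) := by
      have h1 : Function.update y j (c * t)
          = Function.update (Function.update y j t) j
              (Complex.exp (((c.arg : ℝ) : ℂ) * Complex.I) * (Function.update y j t) j) := by
        rw [exp_arg_eq hc]
        simp [Function.update_idem]
      rw [h1, hG3]
    simp only [hFdef, Phi]
    rw [nsq_congr habs, hφ]
  -- subharmonicity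
  have hsub : ∀ t : ℂ, 0 ≤ lap F t := by
    intro t
    have hw : ∀ t0 c : ℂ, w0 ≠ c • (z0 + t0 • w0) := by
      intro t0 c heq
      have h1 := congrFun heq i₀
      have h2 := congrFun heq j
      rw [hline t0] at h1 h2
      simp only [hw0, Pi.single_apply, if_neg (Ne.symm hij), Pi.smul_apply, smul_eq_mul,
        Function.update_apply, if_neg hij] at h1
      simp only [hw0, Pi.single_apply, if_pos rfl, Pi.smul_apply, smul_eq_mul,
        Function.update_apply, if_pos rfl] at h2
      rcases mul_eq_zero.1 h1.symm with hc | hyy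
      · subst hc; rw [zero_mul] at h2; exact one_ne_zero h2
      · exact hy0 hyy
    have := lap_phi_line_pos hadm z0 w0 (fun t => by rw [hline t]; exact hne t) hw t
    have heq : (fun t : ℂ => Phi m φ (z0 + t • w0)) = F := by
      funext t; rw [hline t]
    rw [heq] at this
    exact this.le
  -- convexity of x ↦ F (exp x)
  have hconv := radial_exp_convex hF hrad hsub
  -- boundedness on the left
  obtain ⟨u0, _, hmax⟩ := (isCompact_closedBall (0 : ℂ) 1).exists_isMaxOn
    (Metric.nonempty_closedBall.2 zero_le_one)
    (hF.continuous.continuousOn)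
  have hbdd : ∀ x : ℝ, x ≤ 0 → F (Real.exp x) ≤ F u0 := by
    intro x hx
    apply hmax
    simp only [Metric.mem_closedBall, dist_zero_right,
      Complex.norm_real, Real.norm_eq_abs]
    rw [abs_of_pos (Real.exp_pos x)]
    exact Real.exp_le_one_iff.2 hx
  have hmono : Monotone (fun x : ℝ => F (Real.exp x)) :=
    convex_mono_of_bddAbove hconv (C := F u0) (a := 0) hbdd
  -- conclude
  rcases eq_or_lt_of_le hr with hfr | hfr
  · -- r = 0 : limit argument
    have hstep : ∀ n : ℕ, Real.exp (-(n : ℝ)) ≤ R →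
        F ((Real.exp (-(n : ℝ)) : ℝ) : ℂ) ≤ F ((R : ℝ) : ℂ) := by
      intro n hn
      have := hmono (show -(n:ℝ) ≤ Real.log R by
        rw [← Real.log_exp (-(n:ℝ))]; exact Real.log_le_log (Real.exp_pos _) hn)
      simpa [Real.exp_log hR] using this
    have htend : Filter.Tendsto (fun n : ℕ => F ((Real.exp (-(n : ℝ)) : ℝ) : ℂ))
        Filter.atTop (nhds (F 0)) := by
      apply (hF.continuous.tendsto 0).comp
      have h1 : Filter.Tendsto (fun n : ℕ => Real.exp (-(n : ℝ))) Filter.atTop (nhds 0) := by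
        apply Real.tendsto_exp_atBot.comp
        exact Filter.tendsto_neg_atBot_iff.2 tendsto_natCast_atTop_atTop
      have h2 : Filter.Tendsto (fun x : ℝ => (x : ℂ)) (nhds 0) (nhds ((0:ℝ) : ℂ)) :=
        Complex.continuous_ofReal.tendsto 0
      have h3 := h2.comp h1
      simp only [Function.comp_def] at h3
      simpa using h3
    have hev : ∀ᶠ n : ℕ in Filter.atTop, F ((Real.exp (-(n : ℝ)) : ℝ) : ℂ) ≤ F ((R:ℝ):ℂ) := by
      obtain ⟨N, hN⟩ := exists_nat_ge (-(Real.log R))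
      refine Filter.eventually_atTop.2 ⟨N, fun n hn => ?_⟩
      apply hstep
      rw [← Real.exp_log hR]
      apply Real.exp_le_exp.2
      have : (N : ℝ) ≤ n := Nat.cast_le.2 hn
      linarith
    have := le_of_tendsto htend hev
    rw [← hfr]
    simpa using this
  · -- 0 < r
    have := hmono (Real.log_le_log hfr hrR)
    simpa [Real.exp_log hfr, Real.exp_log (lt_of_lt_of_le hfr hrR)] using this

end Main2

section Main3

variable {m k : ℕ} {φ : (Fin (m + 1) → ℂ) → ℝ}

lemma one_ne_zero_vec : (fun _ : Fin (m + 1) => (1 : ℂ)) ≠ 0 := by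
  intro h
  have := congrFun h 0
  simp at this

lemma Phi_smul (hscal : ScalInv m φ) {M : ℝ} (hM : 0 < M) {y : Fin (m + 1) → ℂ} (hy : y ≠ 0) :
    Phi m φ ((M : ℂ) • y) = Phi m φ y + ((m : ℝ) + 1) * Real.log (M ^ 2) := by
  have hnsq : nsq ((M : ℂ) • y) = M ^ 2 * nsq y := by
    unfold nsq
    rw [Finset.mul_sum]
    apply Finset.sum_congr rfl
    intro i _
    simp [Pi.smul_apply, smul_eq_mul, map_mul, mul_pow, Complex.norm_real, Real.norm_eq_abs, abs_of_pos hM]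
  unfold Phi
  rw [hscal (M : ℂ) (by exact_mod_cast ne_of_gt hM) y, hnsq,
    Real.log_mul (by positivity) (ne_of_gt (nsq_pos hy))]
  ring

lemma phi_le_Phi_one (hsm : ContDiffOn ℝ (⊤ : ℕ∞) φ {z : Fin (m + 1) → ℂ | z ≠ 0})
    (hG3 : ∀ l : Fin (m + 1), ∀ θ : ℝ, ∀ z : Fin (m + 1) → ℂ,
      φ (Function.update z l (Complex.exp ((θ : ℂ) * Complex.I) * z l)) = φ z)
    (hscal : ScalInv m φ) (hadm : Adm m φ)
    {z : Fin (m + 1) → ℂ} (hz : z ≠ 0) :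
    φ z ≤ Phi m φ (fun _ => 1) := by
  classical
  obtain ⟨i₀, -, hmax⟩ := Finset.exists_max_image Finset.univ
    (fun i => ‖z i‖) Finset.univ_nonempty
  set M := ‖z i₀‖ with hMdef
  have hMpos : 0 < M := by
    obtain ⟨j, hj⟩ : ∃ j, z j ≠ 0 := by
      by_contra h; push_neg at h; exact hz (funext fun i => h i)
    exact lt_of_lt_of_le (norm_pos_iff.mpr hj) (hmax j (Finset.mem_univ j))
  set rv : Fin (m + 1) → ℂ := fun i => ((‖z i‖ : ℝ) : ℂ) with hrvdef
  have hφrv : φ rv = φ z := phi_strip_phases hG3 z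
  have hnsqrv : nsq rv = nsq z :=
    nsq_congr fun i => by simp [hrvdef, Complex.norm_real, Real.norm_eq_abs, _root_.abs_of_nonneg (norm_nonneg _)]
  have hPhirv : Phi m φ rv = Phi m φ z := by simp [Phi, hφrv, hnsqrv]
  set blend : Finset (Fin (m + 1)) → (Fin (m + 1) → ℂ) :=
    fun S => fun i => if i ∈ S then ((M : ℝ) : ℂ) else rv i with hblend
  have claim : ∀ S : Finset (Fin (m + 1)), Phi m φ rv ≤ Phi m φ (blend S) := by
    intro S
    induction S using Finset.induction_on with
    | empty => simp [hblend]
    | @insert a s ha ih =>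
        have h1 : blend s = Function.update (blend s) a (((‖z a‖ : ℝ)) : ℂ) := by
          funext i
          rw [Function.update_apply]
          by_cases hia : i = a
          · subst hia; simp [hblend, ha, hrvdef]
          · simp [hia]
        have h2 : blend (insert a s) = Function.update (blend s) a ((M : ℝ) : ℂ) := by
          funext i
          rw [Function.update_apply]
          by_cases hia : i = a
          · subst hia; simp [hblend]
          · simp [hblend, hia, Finset.mem_insert]
        by_cases hia : i₀ = a
        · have hrva : ((‖z a‖ : ℝ) : ℂ) = ((M : ℝ) : ℂ) := by
            rw [hMdef, hia]
          refine ih.trans (le_of_eq ?_)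
          rw [h2, ← hrva, ← h1]
        · refine ih.trans ?_
          rw [h1, h2]
          apply coord_mono hsm hG3 hadm (blend s) a i₀ hia
          · -- blend s i₀ ≠ 0
            have : blend s i₀ = if i₀ ∈ s then ((M : ℝ) : ℂ) else rv i₀ := rfl
            rw [this]
            split_ifs
            · exact_mod_cast ne_of_gt hMpos
            · simp only [hrvdef]
              exact_mod_cast ne_of_gt hMpos
          · exact norm_nonneg _
          · exact hmax a (Finset.mem_univ a)
          · exact hMpos
  have hfinal : Phi m φ (blend Finset.univ)
      = Phi m φ (fun _ => 1) + ((m : ℝ) + 1) * Real.log (M ^ 2) := by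
    have hbl : blend Finset.univ = (M : ℂ) • (fun _ : Fin (m + 1) => (1 : ℂ)) := by
      funext i; simp [hblend]
    rw [hbl, Phi_smul hscal hMpos one_ne_zero_vec]
  have hchain : Phi m φ z ≤ Phi m φ (fun _ => 1) + ((m : ℝ) + 1) * Real.log (M ^ 2) := by
    rw [← hPhirv, ← hfinal]; exact claim Finset.univ
  have hlogle : Real.log (M ^ 2) ≤ Real.log (nsq z) := by
    apply Real.log_le_log (by positivity)
    simpa [hMdef] using nsq_nonneg_terms z i₀
  have hmul := mul_le_mul_of_nonneg_left hlogle (show (0:ℝ) ≤ (m : ℝ) + 1 by positivity)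
  unfold Phi at hchain ⊢
  linarith

lemma zero_le_Phi_one (hsm : ContDiffOn ℝ (⊤ : ℕ∞) φ {z : Fin (m + 1) → ℂ | z ≠ 0})
    (hG3 : ∀ l : Fin (m + 1), ∀ θ : ℝ, ∀ z : Fin (m + 1) → ℂ,
      φ (Function.update z l (Complex.exp ((θ : ℂ) * Complex.I) * z l)) = φ z)
    (hscal : ScalInv m φ) (hadm : Adm m φ)
    (hsup : IsLUB (φ '' {z : Fin (m + 1) → ℂ | z ≠ 0}) 0) :
    0 ≤ Phi m φ (fun _ => 1) := by
  apply hsup.2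
  rintro x ⟨z, hz, rfl⟩
  exact phi_le_Phi_one hsm hG3 hscal hadm hz

lemma card_filter_le' (hkm : k ≤ m) :
    ((Finset.univ : Finset (Fin (m + 1))).filter fun i : Fin (m + 1) => (i : ℕ) ≤ k).card = k + 1 := by
  classical
  rw [Finset.card_filter]
  rw [Fin.sum_univ_eq_sum_range (fun i => if i ≤ k then 1 else 0) (m + 1)]
  have h1 : ∑ i ∈ Finset.range (m + 1), (if i ≤ k then 1 else 0)
      = ∑ i ∈ Finset.range (k + 1), (if i ≤ k then 1 else 0) := by
    refine (Finset.sum_subset (Finset.range_subset_range.2 (by omega)) ?_).symm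
    intro x hx hnx
    simp only [Finset.mem_range] at hx hnx
    simp only [if_neg (by omega : ¬ x ≤ k)]
  rw [h1]
  have h2 : ∀ i ∈ Finset.range (k + 1), (if i ≤ k then 1 else 0) = 1 := by
    intro i hi
    simp only [Finset.mem_range] at hi
    rw [if_pos (by omega)]
  rw [Finset.sum_congr rfl h2, Finset.sum_const, Finset.card_range, smul_eq_mul, mul_one]

lemma card_filter_gt' (hkm : k ≤ m) :
    ((Finset.univ : Finset (Fin (m + 1))).filter fun i : Fin (m + 1) => k + 1 ≤ (i : ℕ)).card = m - k := by
  classical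
  have h1 : ((Finset.univ : Finset (Fin (m + 1))).filter fun i : Fin (m + 1) => k + 1 ≤ (i : ℕ))
      = ((Finset.univ : Finset (Fin (m + 1))).filter fun i : Fin (m + 1) => ¬((i : ℕ) ≤ k)) := by
    apply Finset.filter_congr
    intro i _
    constructor <;> intro h <;> omega
  have h2 := Finset.card_filter_add_card_filter_not
    (s := (Finset.univ : Finset (Fin (m + 1)))) (fun i : Fin (m + 1) => (i : ℕ) ≤ k)
  rw [card_filter_le' hkm] at h2
  simp only [Finset.card_univ, Fintype.card_fin] at h2
  rw [h1]
  omega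

end Main3

end Stmt9Aux

open Stmt9Aux

theorem stmt9 (m k : ℕ) (hm : 2 ≤ m) (hk : 1 ≤ k) (hkm : k ≤ m - 1)
    (φ : (Fin (m + 1) → ℂ) → ℝ)
    (hsm : ContDiffOn ℝ (⊤ : ℕ∞) φ {z : Fin (m + 1) → ℂ | z ≠ 0})
    (hscal : ScalInv m φ) (hG : GInv m k φ) (hadm : Adm m φ)
    (hsup : IsLUB (φ '' {z : Fin (m + 1) → ℂ | z ≠ 0}) 0)
    (ζ : ℝ) (hζ : 0 < ζ) :
    let B : Fin (m + 1) → ℂ := fun i => if (i : ℕ) ≤ k then 1 else (ζ : ℂ)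
    0 ≤ φ B - psi m k B := by
  intro B
  classical
  obtain ⟨hG1, hG2, hG3⟩ := hG
  have hkm' : k ≤ m := le_trans hkm (Nat.sub_le m 1)
  have hklt : k < m := by omega
  set L : ℂ → (Fin (m + 1) → ℂ) := fun t => fun i => if (i : ℕ) ≤ k then (1 : ℂ) else t
    with hLdef
  have hB : B = L ((ζ : ℝ) : ℂ) := rfl
  set z1 : Fin (m + 1) → ℂ := fun i => if (i : ℕ) ≤ k then (1 : ℂ) else 0 with hz1
  set w1 : Fin (m + 1) → ℂ := fun i => if (i : ℕ) ≤ k then (0 : ℂ) else 1 with hw1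
  have hline : ∀ t : ℂ, z1 + t • w1 = L t := by
    intro t; funext i
    by_cases h : (i : ℕ) ≤ k <;> simp [hz1, hw1, hLdef, h]
  have h0k : ((0 : Fin (m + 1)) : ℕ) ≤ k := by simp
  have hmk : ¬ ((Fin.last m : ℕ) ≤ k) := by rw [Fin.val_last]; omega
  have hLne : ∀ t : ℂ, L t ≠ 0 := by
    intro t h
    have := congrFun h 0
    simp only [hLdef, h0k, if_pos, Pi.zero_apply] at this
    exact one_ne_zero this
  have hw_notline : ∀ t0 c : ℂ, w1 ≠ c • (z1 + t0 • w1) := by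
    intro t0 c heq
    rw [hline t0] at heq
    have h1 := congrFun heq 0
    have h2 := congrFun heq (Fin.last m)
    simp only [hw1, hLdef, Pi.smul_apply, smul_eq_mul] at h1 h2
    rw [if_pos h0k, if_pos h0k, mul_one] at h1
    rw [if_neg hmk, if_neg hmk] at h2
    rw [← h1, zero_mul] at h2
    exact one_ne_zero h2
  set G : ℂ → ℝ := fun t => Phi m φ (L t) with hGdef
  have hLform : (fun t : ℂ => L t)
      = fun t : ℂ => (fun i : Fin (m + 1) => if ¬((i : ℕ) ≤ k) then t else (fun _ : Fin (m+1) => (1:ℂ)) i) := by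
    funext t i
    by_cases h : (i : ℕ) ≤ k <;> simp [hLdef, h]
  have hGsmooth : ContDiff ℝ 2 G := by
    rw [hGdef]
    apply contDiff_phi_line hsm L _ hLne
    rw [show L = fun t : ℂ => (fun i : Fin (m + 1) => if ¬((i : ℕ) ≤ k) then t
      else (fun _ : Fin (m+1) => (1:ℂ)) i) from hLform]
    exact contDiff_ite_line _ _
  have hGrad : ∀ c t : ℂ, ‖c‖ = 1 → G (c * t) = G t := by
    intro c t hc
    have habs : ∀ i, ‖L (c * t) i‖ = ‖L t i‖ := by
      intro i
      by_cases h : (i : ℕ) ≤ k <;> simp [hLdef, h, map_mul, hc]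
    have hφeq : φ (L (c * t)) = φ (L t) := by
      have hform : L (c * t) = fun i =>
          if i ∈ (Finset.univ.filter fun j : Fin (m + 1) => ¬((j : ℕ) ≤ k))
          then c * (L t i) else (L t i) := by
        funext i
        simp only [Finset.mem_filter, Finset.mem_univ, true_and, hLdef]
        by_cases h : (i : ℕ) ≤ k
        · rw [if_pos h, if_neg (not_not_intro h), if_pos h]
        · rw [if_neg h, if_pos h, if_neg h]
      rw [hform, phi_phase_finset hG3 hc]
    simp only [hGdef, Phi]
    rw [nsq_congr habs, hφeq]
  have hGsub : ∀ t, 0 ≤ lap G t := by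
    intro t
    have h := lap_phi_line_pos hadm z1 w1 (fun s => by rw [hline s]; exact hLne s)
      hw_notline t
    have he : (fun s : ℂ => Phi m φ (z1 + s • w1)) = G := by
      funext s; rw [hline s]
    rw [he] at h
    exact h.le
  have hconv := radial_exp_convex hGsmooth hGrad hGsub
  set g : ℝ → ℝ := fun x => G ((Real.exp x : ℝ) : ℂ) with hgdef
  have hnsqL : ∀ t : ℂ, nsq (L t) = ((k : ℝ) + 1) + ((m : ℝ) - k) * ‖t‖ ^ 2 := by
    intro t
    unfold nsq
    have hterm : ∀ i : Fin (m + 1), ‖L t i‖ ^ 2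
        = if (i : ℕ) ≤ k then (1 : ℝ) else ‖t‖ ^ 2 := by
      intro i
      by_cases h : (i : ℕ) ≤ k <;> simp [hLdef, h]
    rw [Finset.sum_congr rfl fun i _ => hterm i, Finset.sum_ite, Finset.sum_const,
      Finset.sum_const, card_filter_le' hkm']
    have hcard2 : ((Finset.univ : Finset (Fin (m + 1))).filter
        fun i : Fin (m + 1) => ¬((i : ℕ) ≤ k)).card = m - k := by
      rw [← card_filter_gt' hkm']
      apply congrArg
      apply Finset.filter_congr
      intro i _
      constructor <;> intro h <;> omega
    rw [hcard2]
    simp only [nsmul_eq_mul, mul_one]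
    rw [Nat.cast_sub hkm']
    push_cast
    ring
  have hmknn : (0:ℝ) ≤ (m : ℝ) - k := by
    have : (k : ℝ) ≤ m := Nat.cast_le.2 hkm'
    linarith
  have hφle : ∀ t : ℂ, φ (L t) ≤ 0 := fun t => hsup.1 ⟨L t, hLne t, rfl⟩
  have hGbound : ∀ t : ℂ, G t
      ≤ ((m : ℝ) + 1) * Real.log (((k : ℝ) + 1) + ((m : ℝ) - k) * ‖t‖ ^ 2) := by
    intro t
    have h1 := hφle t
    simp only [hGdef, Phi]
    rw [hnsqL t]
    linarith
  have habsexp : ∀ x : ℝ, ‖((Real.exp x : ℝ) : ℂ)‖ = Real.exp x := by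
    intro x
    rw [Complex.norm_real, Real.norm_eq_abs, abs_of_pos (Real.exp_pos x)]
  have hgb : ∀ x : ℝ, x ≤ 0 → g x ≤ ((m : ℝ) + 1) * Real.log ((m : ℝ) + 1) := by
    intro x hx
    have h1 := hGbound ((Real.exp x : ℝ) : ℂ)
    rw [habsexp x] at h1
    have hE : Real.exp x ≤ 1 := Real.exp_le_one_iff.2 hx
    have hk0 : (0:ℝ) ≤ (k : ℝ) := Nat.cast_nonneg k
    have hE2 : Real.exp x ^ 2 ≤ 1 := by nlinarith [Real.exp_pos x]
    have harg : ((k : ℝ) + 1) + ((m : ℝ) - k) * Real.exp x ^ 2 ≤ (m : ℝ) + 1 := by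
      have h5 := mul_le_mul_of_nonneg_left hE2 hmknn
      linarith
    have hargpos : (0:ℝ) < ((k : ℝ) + 1) + ((m : ℝ) - k) * Real.exp x ^ 2 := by
      have h6 := mul_nonneg hmknn (sq_nonneg (Real.exp x))
      linarith
    have hlog := Real.log_le_log hargpos harg
    have := mul_le_mul_of_nonneg_left hlog (show (0:ℝ) ≤ (m : ℝ) + 1 by positivity)
    exact le_trans h1 this
  have hgmono : Monotone g := convex_mono_of_bddAbove hconv hgb
  set gtil : ℝ → ℝ := fun x => g x - (2 * ((m : ℝ) + 1)) * x with hgtil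
  have hgtconv : ConvexOn ℝ Set.univ gtil := Stmt9Aux.ConvexOn.sub_linear hconv _
  have hgtb : ∀ x : ℝ, 0 ≤ x → gtil x ≤ ((m : ℝ) + 1) * Real.log ((m : ℝ) + 1) := by
    intro x hx
    have h1 := hGbound ((Real.exp x : ℝ) : ℂ)
    rw [habsexp x] at h1
    set E := Real.exp x with hE
    have hEpos : 0 < E := Real.exp_pos x
    have hE1 : 1 ≤ E := Real.one_le_exp hx
    have hk0 : (0:ℝ) ≤ (k : ℝ) := Nat.cast_nonneg k
    have hE2 : 1 ≤ E ^ 2 := by nlinarith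
    have hA : ((k : ℝ) + 1) + ((m : ℝ) - k) * E ^ 2 ≤ ((m : ℝ) + 1) * E ^ 2 := by
      nlinarith [mul_le_mul_of_nonneg_left hE2 (show (0:ℝ) ≤ (k : ℝ) + 1 by positivity)]
    have hApos : (0:ℝ) < ((k : ℝ) + 1) + ((m : ℝ) - k) * E ^ 2 := by
      have h6 := mul_nonneg hmknn (sq_nonneg E)
      linarith
    have hlog : Real.log (((k : ℝ) + 1) + ((m : ℝ) - k) * E ^ 2)
        ≤ Real.log ((m : ℝ) + 1) + 2 * x := by
      have h2 := Real.log_le_log hApos hA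
      rw [Real.log_mul (by positivity) (by positivity), Real.log_pow, Real.log_exp] at h2
      push_cast at h2
      linarith
    have h3 := mul_le_mul_of_nonneg_left hlog (show (0:ℝ) ≤ (m : ℝ) + 1 by positivity)
    simp only [hgtil, hgdef]
    have h4 : G ((E : ℝ) : ℂ) ≤ ((m : ℝ) + 1) * (Real.log ((m : ℝ) + 1) + 2 * x) :=
      le_trans h1 h3
    ring_nf
    ring_nf at h4
    linarith
  have hgtanti : Antitone gtil := convex_anti_of_bddAbove hgtconv hgtb
  have hL1 : L 1 = fun _ : Fin (m + 1) => (1 : ℂ) := by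
    funext i
    by_cases h : (i : ℕ) ≤ k <;> simp [hLdef, h]
  have hg0 : g 0 = Phi m φ (fun _ => 1) := by
    simp only [hgdef, hGdef, Real.exp_zero, Complex.ofReal_one, hL1]
  have hPhi1 : 0 ≤ Phi m φ (fun _ => 1) := zero_le_Phi_one hsm hG3 hscal hadm hsup
  -- psi computations
  have hBform : ∀ i : Fin (m + 1), B i = if (i : ℕ) ≤ k then 1 else (ζ : ℂ) := fun i => rfl
  have hnsqB : nsq B = ((k : ℝ) + 1) + ((m : ℝ) - k) * ζ ^ 2 := by
    rw [hB, hnsqL]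
    rw [Complex.norm_real, Real.norm_eq_abs, abs_of_pos hζ]
  have hnsqBpos : 0 < nsq B := nsq_pos (hB ▸ hLne ((ζ : ℝ) : ℂ))
  have hpsi1 : psi1 m k B = -(((m : ℝ) + 1) * Real.log (nsq B)) := by
    unfold psi1
    have hprod : (∏ i ∈ Finset.univ.filter (fun i : Fin (m + 1) => (i : ℕ) ≤ k),
        ‖B i‖) = 1 := by
      apply Finset.prod_eq_one
      intro i hi
      rw [Finset.mem_filter] at hi
      rw [hBform i, if_pos hi.2]
      simp
    rw [hprod, Real.one_rpow]
    rw [Real.log_div one_ne_zero (ne_of_gt (Real.rpow_pos_of_pos hnsqBpos _))]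
    rw [Real.log_one, Real.log_rpow hnsqBpos]
    ring
  have hpsi2 : psi2 m k B
      = 2 * ((m : ℝ) + 1) * Real.log ζ - ((m : ℝ) + 1) * Real.log (nsq B) := by
    unfold psi2
    have hprod : (∏ i ∈ Finset.univ.filter (fun i : Fin (m + 1) => k + 1 ≤ (i : ℕ)),
        ‖B i‖) = ζ ^ (m - k) := by
      rw [Finset.prod_congr rfl (fun i hi => ?_), Finset.prod_const, card_filter_gt' hkm']
      rw [Finset.mem_filter] at hi
      rw [hBform i, if_neg (by omega : ¬ (i : ℕ) ≤ k)]
      rw [Complex.norm_real, Real.norm_eq_abs, abs_of_pos hζ]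
    rw [hprod]
    have hζpow : (0:ℝ) < ζ ^ (m - k) := pow_pos hζ _
    rw [Real.log_div (ne_of_gt (Real.rpow_pos_of_pos hζpow _))
      (ne_of_gt (Real.rpow_pos_of_pos hnsqBpos _))]
    rw [Real.log_rpow hζpow, Real.log_rpow hnsqBpos, Real.log_pow]
    have hcast : ((m - k : ℕ) : ℝ) = (m : ℝ) - k := by rw [Nat.cast_sub hkm']
    rw [hcast]
    have hne : (m : ℝ) - (k : ℝ) ≠ 0 := by
      have : (k : ℝ) < m := Nat.cast_lt.2 hklt
      linarith
    field_simp
  have hGζ : φ B + ((m : ℝ) + 1) * Real.log (nsq B) = g (Real.log ζ) := by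
    have h1 : g (Real.log ζ) = Phi m φ B := by
      have h2 : g (Real.log ζ) = G ((ζ : ℝ) : ℂ) := by
        simp only [hgdef]
        rw [Real.exp_log hζ]
      rw [h2, hB]
    rw [h1]
    simp only [Phi]
    ring
  rcases le_or_gt 1 ζ with hζ1 | hζ1
  · have hx0 : 0 ≤ Real.log ζ := Real.log_nonneg hζ1
    have hmono := hgmono hx0
    have hmin : psi m k B ≤ psi1 m k B := min_le_left _ _
    rw [hpsi1] at hmin
    rw [hg0] at hmono
    linarith [hGζ, hPhi1]
  · have hx0 : Real.log ζ ≤ 0 := Real.log_nonpos hζ.le hζ1.le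
    have hanti := hgtanti hx0
    have hmin : psi m k B ≤ psi2 m k B := min_le_right _ _
    rw [hpsi2] at hmin
    have hgt0 : gtil 0 = Phi m φ (fun _ => 1) := by
      simp only [hgtil, mul_zero, sub_zero, hg0]
    have hgtl : gtil (Real.log ζ)
        = g (Real.log ζ) - 2 * ((m : ℝ) + 1) * Real.log ζ := rfl
    rw [hgt0, hgtl] at hanti
    linarith [hGζ, hPhi1]

-- #print axioms stmt9
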